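/- arXiv:2005.14375 — 3 statements merged into one kernel-verified Lean document; each statement's English description precedes it below -/
import Mathlib

section
/- For a pure three-qubit state, if C_ik² + C_jk² ≥ 8/9 holds for at least two of the three choices of pairs, then at most one reduced state satisfies S > 1 (steering is monogamous under the F₃ inequality). -/
/-- For a pure three-qubit state with squared concurrences summing to at most
`4/3` and `S_ij = 1 + 2C_ij² − C_ik² − C_jk²`: if `C_ik² + C_jk² ≥ 8/9` holds
for at least two of the three choices of pairs, then at most one reduced state
satisfies `S > 1` (F₃ steering is monogamous). -/
theorem stmt_11 (SAB SAC SBC CAB2 CAC2 CBC2 : ℝ)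
    (hCAB : 0 ≤ CAB2) (hCAC : 0 ≤ CAC2) (hCBC : 0 ≤ CBC2)
    (hsum : CAB2 + CAC2 + CBC2 ≤ 4 / 3)
    (hAB : SAB = 1 + 2 * CAB2 - CAC2 - CBC2)
    (hAC : SAC = 1 + 2 * CAC2 - CAB2 - CBC2)
    (hBC : SBC = 1 + 2 * CBC2 - CAB2 - CAC2)
    (htwo : (CAC2 + CBC2 ≥ 8 / 9 ∧ CAB2 + CBC2 ≥ 8 / 9) ∨
            (CAC2 + CBC2 ≥ 8 / 9 ∧ CAB2 + CAC2 ≥ 8 / 9) ∨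
            (CAB2 + CBC2 ≥ 8 / 9 ∧ CAB2 + CAC2 ≥ 8 / 9)) :
    ¬(SAB > 1 ∧ SAC > 1) ∧ ¬(SAB > 1 ∧ SBC > 1) ∧
    ¬(SAC > 1 ∧ SBC > 1) := by
  subst hAB hAC hBC
  rcases htwo with ⟨h1, h2⟩ | ⟨h1, h2⟩ | ⟨h1, h2⟩ <;>
    refine ⟨fun ⟨a, b⟩ => ?_, fun ⟨a, b⟩ => ?_, fun ⟨a, b⟩ => ?_⟩ <;> linarith
end

section
/- For a pure three-qubit state, if C_ij² > 4/9 for two distinct pairs {i,j}, then both corresponding reduced states satisfy S > 1 (steering is non-monogamous). -/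
/-- For a pure three-qubit state with squared concurrences summing to at most
`4/3` and `S_ij = 1 + 2C_ij² − C_ik² − C_jk²`: if `C_ij² > 4/9` for two
distinct pairs, then both corresponding reduced states satisfy `S > 1`
(F₃ steering is non-monogamous). -/
theorem stmt_12 (SAB SAC SBC CAB2 CAC2 CBC2 : ℝ)
    (hCAB : 0 ≤ CAB2) (hCAC : 0 ≤ CAC2) (hCBC : 0 ≤ CBC2)
    (hsum : CAB2 + CAC2 + CBC2 ≤ 4 / 3)
    (hAB : SAB = 1 + 2 * CAB2 - CAC2 - CBC2)
    (hAC : SAC = 1 + 2 * CAC2 - CAB2 - CBC2)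
    (hBC : SBC = 1 + 2 * CBC2 - CAB2 - CAC2) :
    (CAB2 > 4 / 9 ∧ CAC2 > 4 / 9 → SAB > 1 ∧ SAC > 1) ∧
    (CAB2 > 4 / 9 ∧ CBC2 > 4 / 9 → SAB > 1 ∧ SBC > 1) ∧
    (CAC2 > 4 / 9 ∧ CBC2 > 4 / 9 → SAC > 1 ∧ SBC > 1) := by
  subst hAB hAC hBC
  refine ⟨?_, ?_, ?_⟩ <;> rintro ⟨h1, h2⟩ <;> constructor <;> linarith
end

section
/- For any pure three-qubit state, I_local + I_nonlocal ≤ 3, where I_local = |a|² + |b|² + |c|² and I_nonlocal = max over pairs of (N_ij + N_ik) with N_ij = max{0, S_ij − 1}. -/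
/-- For a pure three-qubit state with Bloch lengths `|a|², |b|², |c|² ≤ 1`
satisfying `|b|² + |c|² ≤ 1 + |a|²` (and permutations) and steering
parameters `S_AB = 1 + 2|c|² − |a|² − |b|²` etc., the local information
`I_local = |a|² + |b|² + |c|²` and the bipartite nonlocal information
`I_nonlocal = max over pairs of (N_ij + N_ik)` with `N_ij = max{0, S_ij−1}`
satisfy `I_local + I_nonlocal ≤ 3`. -/
theorem stmt_17 (a2 b2 c2 SAB SAC SBC : ℝ)
    (ha0 : 0 ≤ a2) (hb0 : 0 ≤ b2) (hc0 : 0 ≤ c2)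
    (ha1 : a2 ≤ 1) (hb1 : b2 ≤ 1) (hc1 : c2 ≤ 1)
    (hA : b2 + c2 ≤ 1 + a2) (hB : a2 + c2 ≤ 1 + b2) (hC : a2 + b2 ≤ 1 + c2)
    (hAB : SAB = 1 + 2 * c2 - a2 - b2)
    (hAC : SAC = 1 + 2 * b2 - a2 - c2)
    (hBC : SBC = 1 + 2 * a2 - b2 - c2) :
    (a2 + b2 + c2) +
      max (max 0 (SAB - 1) + max 0 (SAC - 1))
        (max (max 0 (SAB - 1) + max 0 (SBC - 1))
          (max 0 (SAC - 1) + max 0 (SBC - 1))) ≤ 3 := by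
  subst hAB hAC hBC
  rcases le_total (1 + 2 * c2 - a2 - b2 - 1) 0 with h1 | h1 <;>
  rcases le_total (1 + 2 * b2 - a2 - c2 - 1) 0 with h2 | h2 <;>
  rcases le_total (1 + 2 * a2 - b2 - c2 - 1) 0 with h3 | h3 <;>
  simp only [max_eq_left, max_eq_right, h1, h2, h3] <;>
  (apply add_le_of_le_sub_left; refine max_le (by linarith) (max_le (by linarith) (by linarith)))
end
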